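/- arXiv:2309.08693 — 3 statements merged into one kernel-verified Lean document; each statement's English description precedes it below -/
import Mathlib

section
/- Let $H = (V, S)$ be a signed hypergraph and let $\mathcal{I}$ be the system of linear equalities obtained by linearizing, for each signed edge $s \in S$, the multilinear expansion of $\prod_{v \in s} \sigma_s(z_v)$ in terms of the monomial variables of the multilinear hypergraph $\mathrm{mh}(H)$. Then the pseudo-Boolean polytope $\mathrm{PBP}(H)$ equals the projection onto the $(x, z)$-variables of the set of points $(x, y, z)$ satisfying $\mathcal{I}$ with $(x, y)$ in the multilinear polytope of $\mathrm{mh}(H)$. -/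
open Finset

/-- A signed edge on node set `V`: an underlying edge together with a sign function
(`true` = +1, `false` = -1; only values on `edge` are relevant). -/
structure SignedEdge (V : Type*) where
  edge : Finset V
  sign : V → Bool

instance {V : Type*} [DecidableEq V] [Fintype V] : DecidableEq (SignedEdge V) :=
  fun a b =>
    decidable_of_iff (a.edge = b.edge ∧ a.sign = b.sign) (by
      constructor
      · rintro ⟨h1, h2⟩; cases a; cases b; simp_all
      · rintro rfl; exact ⟨rfl, rfl⟩)

variable {V : Type*} [DecidableEq V] [Fintype V]

/-- The positively signed part `p(s)` of a signed edge. -/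
def posPart (s : SignedEdge V) : Finset V := s.edge.filter fun v => s.sign v = true

/-- The negatively signed part of a signed edge. -/
def negPart (s : SignedEdge V) : Finset V := s.edge.filter fun v => s.sign v = false

/-- The edge set of the multilinear hypergraph `mh(H)`: all sets `p(s) ∪ t` with `s ∈ S`,
`t` a subset of the negatively signed part of `s`, of cardinality at least two. -/
def mhEdges (S : Finset (SignedEdge V)) : Finset (Finset V) :=
  (S.biUnion fun s => (negPart s).powerset.image fun t => posPart s ∪ t).filter
    fun e => 2 ≤ e.card

/-- The pseudo-Boolean set `PBS(H)` of the signed hypergraph `H = (V, S)`, as a subset of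
`ℝ^V × ℝ^S`. -/
def PBS (S : Finset (SignedEdge V)) : Set ((V → ℝ) × (↥S → ℝ)) :=
  {p | (∀ v, p.1 v = 0 ∨ p.1 v = 1) ∧
    ∀ s : ↥S, p.2 s = ∏ v ∈ (↑s : SignedEdge V).edge,
      (if (↑s : SignedEdge V).sign v then p.1 v else 1 - p.1 v)}

/-- The multilinear set of the hypergraph `(V, E)`, as a subset of `ℝ^V × ℝ^E`. -/
def MLS (E : Finset (Finset V)) : Set ((V → ℝ) × (↥E → ℝ)) :=
  {p | (∀ v, p.1 v = 0 ∨ p.1 v = 1) ∧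
    ∀ e : ↥E, p.2 e = ∏ v ∈ (↑e : Finset V), p.1 v}

/-- The value associated to an index set `A` in the linearization system `𝓘`: the `y`-variable
of `A` if `A` is an edge of `mh(H)`, `x_a` if `A = {a}`, and `1` if `A = ∅`. -/
def linVal (S : Finset (SignedEdge V)) (x : V → ℝ) (y : ↥(mhEdges S) → ℝ)
    (A : Finset V) : ℝ :=
  if hA : A ∈ mhEdges S then y ⟨A, hA⟩ else ∏ v ∈ A, x v

/-! The map `(x, y) ↦ (x, z)`, with `z` defined by the equalities `𝓘`, is affine: an index set
`p(s) ∪ t` that is not an edge of `mh(H)` has at most one element, so the product of the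
`x`-variables over it is `1` or a single `x_v`. On the multilinear set of `mh(H)` the equalities
compute `z_s = ∏ σ_s(x_v)` by inclusion–exclusion, hence the map sends that set onto `PBS(H)`,
and affine maps commute with convex hulls. -/

theorem Finset.prod_eq_sum_add_ite_of_card_le_one {ι R : Type*} [DecidableEq ι] [CommSemiring R]
    {A : Finset ι} (hA : A.card ≤ 1) (f : ι → R) :
    ∏ i ∈ A, f i = ∑ i ∈ A, f i + if A = ∅ then 1 else 0 := by
  rcases Nat.le_one_iff_eq_zero_or_eq_one.mp hA with h | h
  · simp [Finset.card_eq_zero.mp h]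
  · obtain ⟨a, rfl⟩ := Finset.card_eq_one.mp h
    simp

omit [DecidableEq V] [Fintype V] in
theorem disjoint_posPart_negPart (s : SignedEdge V) : Disjoint (posPart s) (negPart s) := by
  have h := Finset.disjoint_filter_filter_not s.edge s.edge (fun v => s.sign v = true)
  simp only [Bool.not_eq_true] at h
  exact h

omit [Fintype V] in
theorem prod_sign_eq_sum_powerset (s : SignedEdge V) (x : V → ℝ) :
    ∏ v ∈ s.edge, (if s.sign v then x v else 1 - x v) =
      ∑ t ∈ (negPart s).powerset, (-1) ^ t.card * ∏ v ∈ posPart s ∪ t, x v := by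
  have hpos : s.edge.filter (fun v => s.sign v = true) = posPart s := rfl
  have hneg : s.edge.filter (fun v => ¬ s.sign v = true) = negPart s := by
    simp only [Bool.not_eq_true]; rfl
  rw [Finset.prod_ite, hpos, hneg, Finset.prod_sub (fun _ => 1), Finset.mul_sum]
  refine Finset.sum_congr rfl fun t ht => ?_
  rw [Finset.prod_const_one, mul_one,
    Finset.prod_union ((disjoint_posPart_negPart s).mono_right (Finset.mem_powerset.mp ht))]
  ring

omit [Fintype V] in
theorem card_le_one_of_notMem_mhEdges {S : Finset (SignedEdge V)} {s : SignedEdge V}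
    {t : Finset V} (hs : s ∈ S) (ht : t ⊆ negPart s) (hst : posPart s ∪ t ∉ mhEdges S) :
    (posPart s ∪ t).card ≤ 1 := by
  by_contra! hcard
  refine hst (Finset.mem_filter.mpr ⟨Finset.mem_biUnion.mpr ⟨s, hs, ?_⟩, hcard⟩)
  exact Finset.mem_image_of_mem _ (Finset.mem_powerset.mpr ht)

omit [Fintype V] in
theorem ne_empty_of_mem_mhEdges {S : Finset (SignedEdge V)} {A : Finset V}
    (hA : A ∈ mhEdges S) : A ≠ ∅ := by
  rintro rfl
  simp [mhEdges] at hA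

section

variable (S : Finset (SignedEdge V))

def linValLinear (A : Finset V) : ((V → ℝ) × (↥(mhEdges S) → ℝ)) →ₗ[ℝ] ℝ :=
  if hA : A ∈ mhEdges S then LinearMap.proj ⟨A, hA⟩ ∘ₗ LinearMap.snd ℝ _ _
  else ∑ v ∈ A, LinearMap.proj v ∘ₗ LinearMap.fst ℝ _ _

omit [Fintype V] in
theorem linVal_eq_linValLinear_add {A : Finset V} (hA : A ∉ mhEdges S → A.card ≤ 1)
    (x : V → ℝ) (y : ↥(mhEdges S) → ℝ) :
    linVal S x y A = linValLinear S A (x, y) + if A = ∅ then 1 else 0 := by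
  by_cases hmem : A ∈ mhEdges S
  · simp [linVal, linValLinear, hmem, ne_empty_of_mem_mhEdges hmem]
  · simp [linVal, linValLinear, hmem, Finset.prod_eq_sum_add_ite_of_card_le_one (hA hmem)]

omit [Fintype V] in
theorem linVal_add {A : Finset V} (hA : A ∉ mhEdges S → A.card ≤ 1)
    (x x' : V → ℝ) (y y' : ↥(mhEdges S) → ℝ) :
    linVal S (x + x') (y + y') A = linValLinear S A (x, y) + linVal S x' y' A := by
  rw [linVal_eq_linValLinear_add S hA, linVal_eq_linValLinear_add S hA, ← Prod.mk_add_mk,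
    map_add, add_assoc]

def linearization : ((V → ℝ) × (↥(mhEdges S) → ℝ)) →ᵃ[ℝ] ((V → ℝ) × (↥S → ℝ)) where
  toFun p := (p.1, fun s => ∑ t ∈ (negPart s.1).powerset,
    (-1 : ℝ) ^ t.card * linVal S p.1 p.2 (posPart s.1 ∪ t))
  linear := (LinearMap.fst ℝ _ _).prod <| LinearMap.pi fun s =>
    ∑ t ∈ (negPart s.1).powerset, (-1 : ℝ) ^ t.card • linValLinear S (posPart s.1 ∪ t)
  map_vadd' p v := by
    refine Prod.ext rfl (funext fun s => ?_)
    simp only [vadd_eq_add, Prod.snd_add, Pi.add_apply, LinearMap.prod_apply, Function.prod,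
      LinearMap.pi_apply, LinearMap.sum_apply]
    rw [← Finset.sum_add_distrib]
    refine Finset.sum_congr rfl fun t ht => ?_
    rw [Prod.fst_add,
      linVal_add S (card_le_one_of_notMem_mhEdges s.2 (Finset.mem_powerset.mp ht)),
      LinearMap.smul_apply, smul_eq_mul, mul_add]

omit [Fintype V] in
theorem linVal_eq_prod_of_mem_MLS {x : V → ℝ} {y : ↥(mhEdges S) → ℝ}
    (hxy : (x, y) ∈ MLS (mhEdges S)) (A : Finset V) : linVal S x y A = ∏ v ∈ A, x v := by
  unfold linVal
  split_ifs with hA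
  exacts [hxy.2 ⟨A, hA⟩, rfl]

omit [Fintype V] in
theorem linearization_image_MLS : linearization S '' MLS (mhEdges S) = PBS S := by
  ext p
  constructor
  · rintro ⟨⟨x, y⟩, hxy, rfl⟩
    refine ⟨hxy.1, fun s => ?_⟩
    simp only [linearization, AffineMap.coe_mk, linVal_eq_prod_of_mem_MLS S hxy,
      prod_sign_eq_sum_powerset]
  · rintro ⟨hx, hz⟩
    have hxy : (p.1, fun e : ↥(mhEdges S) => ∏ v ∈ e.1, p.1 v) ∈ MLS (mhEdges S) :=
      ⟨hx, fun _ => rfl⟩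
    refine ⟨_, hxy, Prod.ext rfl (funext fun s => ?_)⟩
    simp only [linearization, AffineMap.coe_mk, linVal_eq_prod_of_mem_MLS S hxy, hz s,
      prod_sign_eq_sum_powerset]

end

theorem stmt_5_general (S : Finset (SignedEdge V)) :
    convexHull ℝ (PBS S) =
      {p : (V → ℝ) × (↥S → ℝ) | ∃ y : ↥(mhEdges S) → ℝ,
        (p.1, y) ∈ convexHull ℝ (MLS (mhEdges S)) ∧
        ∀ s : ↥S, p.2 s = ∑ t ∈ (negPart (↑s : SignedEdge V)).powerset,
          (-1 : ℝ) ^ t.card * linVal S p.1 y (posPart (↑s : SignedEdge V) ∪ t)} := by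
  rw [← linearization_image_MLS, ← AffineMap.image_convexHull]
  ext p
  constructor
  · rintro ⟨⟨x, y⟩, hxy, rfl⟩
    exact ⟨y, hxy, fun s => rfl⟩
  · rintro ⟨y, hxy, hz⟩
    exact ⟨(p.1, y), hxy, Prod.ext rfl (funext fun s => (hz s).symm)⟩

/-- The pseudo-Boolean polytope `PBP(H)` equals the projection onto the
`(x, z)`-variables of the points `(x, y, z)` satisfying the linearization system `𝓘`
(one equation `z_s = ∑_{t ⊆ neg(s)} (-1)^{|t|} val(p(s) ∪ t)` per signed edge `s`) with
`(x, y)` in the multilinear polytope of `mh(H)`. -/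
theorem stmt_5 (S : Finset (SignedEdge V)) (hS : ∀ s ∈ S, 2 ≤ s.edge.card) :
    convexHull ℝ (PBS S) =
      {p : (V → ℝ) × (↥S → ℝ) | ∃ y : ↥(mhEdges S) → ℝ,
        (p.1, y) ∈ convexHull ℝ (MLS (mhEdges S)) ∧
        ∀ s : ↥S, p.2 s = ∑ t ∈ (negPart (↑s : SignedEdge V)).powerset,
          (-1 : ℝ) ^ t.card * linVal S p.1 y (posPart (↑s : SignedEdge V) ∪ t)} :=
  stmt_5_general S
end

section
/- Let $p_1 \subseteq \cdots \subseteq p_k$ be signed sets with underlying sets totally ordered by inclusion, and let $z \in \{0,1\}^U$ be a binary point on the union of the underlying sets, defining $z_{p_i} := \prod_{v \in p_i} \sigma_{p_i}(z_v)$. If $z_{p_i} = 1$ and $z_{p_t} = 0$ for all $t \in \mathrm{ext}(i)$, then $z_{p_t} = 0$ for all $t \in \{i+1, \dots, k\}$; moreover if $z_{p_i}=1$ then at most one $t \in \mathrm{ext}(i)$ has $z_{p_t}=1$. -/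
/-! For binary `z`, the product `z_{p_t}` is `1` exactly when the signs `η_t` agree on `e_t`
with the sign pattern `s v := (z v = 1)` of `z`, and `0` otherwise. Both claims are then about
signed sets agreeing with one fixed pattern `s`: two such sets `p_j ⊆ p_t` must have the same
signs on `e_j`, so `p_t` extends `p_j`, and conversely anything extended by an agreeing set
agrees as well. Hence the first agreeing `p_t` after `p_i` is a minimal extension of `p_i`, and
two agreeing minimal extensions would extend one another. -/

open Finset

/-- `p_t` is an extension of `p_j` (for `j < t`): the signs agree on the underlying set of
`p_j`. -/
def IsExt {V : Type*} {k : ℕ} (e : Fin k → Finset V) (η : Fin k → V → Bool)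
    (j t : Fin k) : Prop :=
  j < t ∧ ∀ v ∈ e j, η t v = η j v

/-- `p_t` is a minimal extension of `p_i`: it extends `p_i` and extends no `p_j` with
`i < j < t`. -/
def IsMinExt {V : Type*} {k : ℕ} (e : Fin k → Finset V) (η : Fin k → V → Bool)
    (i t : Fin k) : Prop :=
  IsExt e η i t ∧ ∀ j, i < j → j < t → ¬ IsExt e η j t

section SignFactor

variable {V : Type*} {z : V → ℝ}

lemma signFactor_eq_zero_or_one {x : ℝ} (hx : x = 0 ∨ x = 1) (b : Bool) :
    (if b then x else 1 - x) = 0 ∨ (if b then x else 1 - x) = 1 := by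
  rcases hx with rfl | rfl <;> cases b <;> norm_num

lemma signFactor_eq_one_iff {x : ℝ} (hx : x = 0 ∨ x = 1) (b : Bool) :
    (if b then x else 1 - x) = 1 ↔ b = decide (x = 1) := by
  rcases hx with rfl | rfl <;> cases b <;> norm_num

lemma prod_signFactor_eq_zero_or_one (hz : ∀ v, z v = 0 ∨ z v = 1) (η : V → Bool)
    (s : Finset V) :
    (∏ v ∈ s, if η v then z v else 1 - z v) = 0 ∨
      (∏ v ∈ s, if η v then z v else 1 - z v) = 1 :=
  Finset.prod_induction _ (fun x : ℝ => x = 0 ∨ x = 1)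
    (fun a b ha hb => by rcases ha with rfl | rfl <;> rcases hb with rfl | rfl <;> norm_num)
    (Or.inr rfl) (fun v _ => signFactor_eq_zero_or_one (hz v) (η v))

lemma prod_signFactor_eq_one_iff (hz : ∀ v, z v = 0 ∨ z v = 1) (η : V → Bool)
    (s : Finset V) :
    (∏ v ∈ s, if η v then z v else 1 - z v) = 1 ↔ ∀ v ∈ s, η v = decide (z v = 1) := by
  simp_rw [← signFactor_eq_one_iff (hz _)]
  refine ⟨fun h v hv => ?_, Finset.prod_eq_one⟩
  refine (signFactor_eq_zero_or_one (hz v) (η v)).resolve_left fun h0 => ?_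
  rw [Finset.prod_eq_zero hv h0] at h
  exact zero_ne_one h

end SignFactor

section SignsAgree

variable {V : Type*} {k : ℕ} {e : Fin k → Finset V} {η : Fin k → V → Bool} {s : V → Bool}

def SignsAgree (e : Fin k → Finset V) (η : Fin k → V → Bool) (s : V → Bool) (t : Fin k) :
    Prop :=
  ∀ v ∈ e t, η t v = s v

lemma SignsAgree.isExt (hmono : Monotone e) {j t : Fin k} (hjt : j < t)
    (hj : SignsAgree e η s j) (ht : SignsAgree e η s t) : IsExt e η j t :=
  ⟨hjt, fun v hv => (ht v (hmono hjt.le hv)).trans (hj v hv).symm⟩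

lemma SignsAgree.of_isExt (hmono : Monotone e) {j t : Fin k} (hext : IsExt e η j t)
    (ht : SignsAgree e η s t) : SignsAgree e η s j :=
  fun v hv => (hext.2 v hv).symm.trans (ht v (hmono hext.1.le hv))

lemma exists_isMinExt_signsAgree (hmono : Monotone e) {i t : Fin k}
    (hi : SignsAgree e η s i) (hit : i < t) (ht : SignsAgree e η s t) :
    ∃ t', IsMinExt e η i t' ∧ SignsAgree e η s t' := by
  induction t using WellFoundedLT.induction with
  | _ t ih =>
    by_cases hmin : ∀ j, i < j → j < t → ¬ IsExt e η j t
    · exact ⟨t, ⟨hi.isExt hmono hit ht, hmin⟩, ht⟩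
    · push Not at hmin
      obtain ⟨j, hij, hjt, hext⟩ := hmin
      exact ih j hjt hij (ht.of_isExt hmono hext)

lemma IsMinExt.eq_of_signsAgree (hmono : Monotone e) {i t t' : Fin k}
    (hmin : IsMinExt e η i t) (hmin' : IsMinExt e η i t')
    (ht : SignsAgree e η s t) (ht' : SignsAgree e η s t') : t = t' := by
  by_contra hne
  rcases lt_or_gt_of_ne hne with hlt | hlt
  · exact hmin'.2 t hmin.1.1 hlt (ht.isExt hmono hlt ht')
  · exact hmin.2 t' hmin'.1.1 hlt (ht'.isExt hmono hlt ht)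

end SignsAgree

/-- For signed sets `p₁ ⊆ ⋯ ⊆ p_k` with underlying sets totally ordered by
inclusion and a binary point `z`, writing `z_{pᵢ} = ∏_{v ∈ pᵢ} σ_{pᵢ}(z_v)`: if `z_{pᵢ} = 1`
and `z_{p_t} = 0` for all `t ∈ ext(i)` (the minimal extensions of `pᵢ`), then `z_{p_t} = 0`
for all `t > i`; moreover if `z_{pᵢ} = 1` then at most one `t ∈ ext(i)` has `z_{p_t} = 1`. -/
theorem stmt_11 {V : Type*} (k : ℕ) (e : Fin k → Finset V) (η : Fin k → V → Bool)
    (hmono : ∀ i j : Fin k, i ≤ j → e i ⊆ e j)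
    (z : V → ℝ) (hz : ∀ v, z v = 0 ∨ z v = 1)
    (zp : Fin k → ℝ)
    (hzp : ∀ i, zp i = ∏ v ∈ e i, (if η i v then z v else 1 - z v))
    (i : Fin k) (hi : zp i = 1) :
    ((∀ t, IsMinExt e η i t → zp t = 0) → ∀ t, i < t → zp t = 0) ∧
    (∀ t t', IsMinExt e η i t → IsMinExt e η i t' →
      zp t = 1 → zp t' = 1 → t = t') := by
  have he : Monotone e := fun a b hab => hmono a b hab
  have one_iff : ∀ t, zp t = 1 ↔ SignsAgree e η (fun v => decide (z v = 1)) t := fun t => by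
    rw [hzp t]
    exact prod_signFactor_eq_one_iff hz (η t) (e t)
  have zero_iff : ∀ t, zp t = 0 ↔ ¬ SignsAgree e η (fun v => decide (z v = 1)) t := fun t => by
    rw [← one_iff, hzp t]
    rcases prod_signFactor_eq_zero_or_one hz (η t) (e t) with h | h <;> simp [h]
  refine ⟨fun hext t hit => (zero_iff t).2 fun ht => ?_, fun t t' ht ht' h1 h1' =>
    ht.eq_of_signsAgree he ht' ((one_iff t).1 h1) ((one_iff t').1 h1')⟩
  obtain ⟨t', hmin, ht'⟩ := exists_isMinExt_signsAgree he ((one_iff i).1 hi) hit ht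
  exact (zero_iff t').1 (hext t' hmin) ht'
end

section
/- Let $G = (V, E)$ be a hypergraph with a sequence of $\alpha$-leaves $v_1, \dots, v_n$ exhausting $V$ (so $G$ is $\alpha$-acyclic), let $\bar{e}$ be a maximal edge containing $v_1$, and let $G'$ be obtained from $G$ by replacing every edge containing $v_1$ and contained in $\bar{e}$ by $\bar{e}$ (and adding edges $e \setminus \{v_1\}$ for all edges $e$ containing $v_1$). Then $v_1$ is a $\beta$-leaf of $G'$, and $v_2, \dots, v_n$ is a sequence of $\alpha$-leaves of $G' - v_1$. -/
open Finset

variable {V : Type*} [DecidableEq V]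

/-- Removal of a node from a hypergraph edge set: erase `v` from every edge and keep the
nonempty results. -/
def eraseNodeE (E : Finset (Finset V)) (v : V) : Finset (Finset V) :=
  (E.image fun e => e.erase v).filter fun e => e.Nonempty

/-- `v` is a β-leaf: the edges containing `v` are totally ordered by inclusion. -/
def BetaLeaf (E : Finset (Finset V)) (v : V) : Prop :=
  ∀ e ∈ E, ∀ f ∈ E, v ∈ e → v ∈ f → e ⊆ f ∨ f ⊆ e

/-- `v` is an α-leaf: the family of edges containing `v` has a maximal element containing
them all. -/
def AlphaLeaf (E : Finset (Finset V)) (v : V) : Prop :=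
  ∃ m ∈ E, v ∈ m ∧ ∀ f ∈ E, v ∈ f → f ⊆ m

/-- Successive removal of a list of nodes. -/
def removeList (E : Finset (Finset V)) (l : List V) : Finset (Finset V) :=
  l.foldl eraseNodeE E

/-- Inflation at `v₁` towards the maximal edge `ē`: every edge containing `v₁` (all of which
are contained in `ē`) is replaced by `ē`, and the edges `e \ {v₁}` for edges `e ∋ v₁` are
added. -/
def inflateAt (E : Finset (Finset V)) (v1 : V) (ebar : Finset V) : Finset (Finset V) :=
  E.image (fun e => if v1 ∈ e then ebar else e) ∪
    (E.filter fun e => v1 ∈ e).image fun e => e.erase v1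

/-! Inflation collapses all edges through `v₁` into `ē`, which makes `v₁` a β-leaf. It does not
change the hypergraph `G - v₁`: the added edges `e \ {v₁}` already occur there, and so does
`ē \ {v₁}` because `ē` is an edge of `G`. Hence the α-leaf sequence `v₂, …, vₙ` of `G - v₁`
is one of `G' - v₁`. -/

def IsAlphaLeafSeq (E : Finset (Finset V)) (l : List V) : Prop :=
  ∀ i : ℕ, ∀ h : i < l.length, AlphaLeaf (removeList E (l.take i)) (l.get ⟨i, h⟩)

theorem removeList_cons (E : Finset (Finset V)) (v : V) (l : List V) :
    removeList E (v :: l) = removeList (eraseNodeE E v) l :=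
  rfl

theorem IsAlphaLeafSeq.tail {E : Finset (Finset V)} {v : V} {l : List V}
    (h : IsAlphaLeafSeq E (v :: l)) : IsAlphaLeafSeq (eraseNodeE E v) l := fun i hi => by
  simpa only [List.take_succ_cons, removeList_cons, List.get_cons_succ] using
    h (i + 1) (Nat.succ_lt_succ hi)

section inflateAt

variable {E : Finset (Finset V)} {v : V} {ebar : Finset V}

theorem eq_of_mem_inflateAt {e : Finset V} (he : e ∈ inflateAt E v ebar) (hve : v ∈ e) :
    e = ebar := by
  rcases mem_union.1 he with he | he
  · obtain ⟨e₀, -, rfl⟩ := mem_image.1 he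
    by_cases hv₀ : v ∈ e₀
    · exact if_pos hv₀
    · simp only [hv₀, if_false] at hve
  · obtain ⟨e₀, -, rfl⟩ := mem_image.1 he
    exact absurd hve (notMem_erase v e₀)

theorem betaLeaf_inflateAt : BetaLeaf (inflateAt E v ebar) v := by
  intro e he f hf hve hvf
  rw [eq_of_mem_inflateAt he hve, eq_of_mem_inflateAt hf hvf]
  exact Or.inl subset_rfl

theorem image_erase_inflateAt (hebar : ebar ∈ E) :
    (inflateAt E v ebar).image (·.erase v) = E.image (·.erase v) := by
  ext x
  simp only [inflateAt, mem_image, mem_union, mem_filter]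
  constructor
  · rintro ⟨_, ⟨e, he, rfl⟩ | ⟨e, ⟨he, -⟩, rfl⟩, rfl⟩
    · by_cases hve : v ∈ e
      · exact ⟨ebar, hebar, by rw [if_pos hve]⟩
      · exact ⟨e, he, by rw [if_neg hve]⟩
    · exact ⟨e, he, erase_idem.symm⟩
  · rintro ⟨e, he, rfl⟩
    by_cases hve : v ∈ e
    · exact ⟨e.erase v, Or.inr ⟨e, ⟨he, hve⟩, rfl⟩, erase_idem⟩
    · exact ⟨e, Or.inl ⟨e, he, if_neg hve⟩, rfl⟩

theorem eraseNodeE_inflateAt (hebar : ebar ∈ E) :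
    eraseNodeE (inflateAt E v ebar) v = eraseNodeE E v := by
  rw [eraseNodeE, eraseNodeE, image_erase_inflateAt hebar]

end inflateAt

theorem stmt_15_general (E : Finset (Finset V))
    (l : List V)
    (halpha : ∀ i : ℕ, ∀ h : i < l.length,
      AlphaLeaf (removeList E (l.take i)) (l.get ⟨i, h⟩))
    (v1 : V) (rest : List V) (hl : l = v1 :: rest)
    (ebar : Finset V) (hebar : ebar ∈ E) :
    BetaLeaf (inflateAt E v1 ebar) v1 ∧
    ∀ i : ℕ, ∀ h : i < rest.length,
      AlphaLeaf (removeList (eraseNodeE (inflateAt E v1 ebar) v1) (rest.take i))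
        (rest.get ⟨i, h⟩) := by
  subst hl
  have hrest : IsAlphaLeafSeq (eraseNodeE E v1) rest := IsAlphaLeafSeq.tail halpha
  rw [eraseNodeE_inflateAt hebar]
  exact ⟨betaLeaf_inflateAt, hrest⟩

/-- Let `G = (V, E)` be an α-acyclic hypergraph with a sequence of α-leaves
`v₁, v₂, …, v_n` exhausting `V`, let `ē` be a maximal edge containing `v₁` (containing every
edge that contains `v₁`), and let `G'` be obtained from `G` by inflating all edges containing
`v₁` to `ē` and adding the edges `e \ {v₁}` for edges `e ∋ v₁`. Then `v₁` is a β-leaf of `G'`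
and `v₂, …, v_n` is a sequence of α-leaves of `G' - v₁`. -/
theorem stmt_15 [Fintype V] (E : Finset (Finset V)) (hE : ∀ e ∈ E, 2 ≤ e.card)
    (l : List V) (hnd : l.Nodup) (hall : ∀ v : V, v ∈ l)
    (halpha : ∀ i : ℕ, ∀ h : i < l.length,
      AlphaLeaf (removeList E (l.take i)) (l.get ⟨i, h⟩))
    (v1 : V) (rest : List V) (hl : l = v1 :: rest)
    (ebar : Finset V) (hebar : ebar ∈ E) (hv1 : v1 ∈ ebar)
    (hmax : ∀ f ∈ E, v1 ∈ f → f ⊆ ebar) :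
    BetaLeaf (inflateAt E v1 ebar) v1 ∧
    ∀ i : ℕ, ∀ h : i < rest.length,
      AlphaLeaf (removeList (eraseNodeE (inflateAt E v1 ebar) v1) (rest.take i))
        (rest.get ⟨i, h⟩) :=
  stmt_15_general E l halpha v1 rest hl ebar hebar
end
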